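/- arXiv:2605.23879 — 4 statements merged into one kernel-verified Lean document; each statement's English description precedes it below -/
import Mathlib

section
/- Let Θ be a nonempty compact topological space, T > 0, and let s : [0,T] × Θ → ℝ be continuous, such that for each θ the map t ↦ s(t,θ) is continuously differentiable with partial derivative ∂_t s continuous on [0,T] × Θ. Define M(t) = max_{θ∈Θ} s(t,θ) and m(t) = min_{θ∈Θ} s(t,θ). Then for each t ∈ [0,T), the upper Dini derivative satisfies D⁺M(t) ≤ max_{θ ∈ Argmax s(t,·)} ∂_t s(t,θ), and the lower Dini derivative satisfies D⁻m(t) ≥ min_{θ ∈ Argmin s(t,·)} ∂_t s(t,θ). -/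
open Filter Set

/-- Upper Dini derivative: `D⁺g(t) = limsup_{h↓0} (g(t+h) − g(t))/h`. -/
noncomputable def upperDini (g : ℝ → ℝ) (t : ℝ) : ℝ :=
  Filter.limsup (fun h => (g (t + h) - g t) / h) (nhdsWithin 0 (Set.Ioi 0))

/-- Lower Dini derivative: `D⁻g(t) = liminf_{h↓0} (g(t+h) − g(t))/h`. -/
noncomputable def lowerDini (g : ℝ → ℝ) (t : ℝ) : ℝ :=
  Filter.liminf (fun h => (g (t + h) - g t) / h) (nhdsWithin 0 (Set.Ioi 0))

/-!
Fix `c` strictly above `∂ₜs(t, θ)` for every maximiser `θ` of `s(t, ·)`. Near a maximiser `θ`,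
`∂ₜs < c` on a small box `[t, t + δ] × U`, so the mean value inequality gives
`s(τ, θ') ≤ s(t, θ') + c (τ - t) ≤ M(t) + c (τ - t)` there; near a non-maximiser `θ` we have
`s(t, θ) < M(t)`, so by continuity `s(τ, θ') < M(t) + c (τ - t)` on a small box as well.
Compactness of `Θ` makes `M(τ) ≤ M(t) + c (τ - t)` hold for all `τ > t` close to `t`, whence
`D⁺M(t) ≤ c`. The statement for the minimum follows by applying this to `-s`.
-/

open Topology

theorem tendsto_add_nhdsGT_zero (t : ℝ) : Tendsto (t + ·) (𝓝[>] 0) (𝓝[>] t) :=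
  tendsto_nhdsWithin_of_tendsto_nhds_of_eventually_within _
    (by simpa using ((continuous_const_add t).tendsto 0).mono_left nhdsWithin_le_nhds)
    (eventually_nhdsWithin_of_forall fun h (hh : 0 < h) => by simpa using hh)

theorem Filter.Eventually.forall_Icc_of_nhdsGE_prod {α : Type*} {l : Filter α} {t : ℝ}
    {P : ℝ → α → Prop} (h : ∀ᶠ p in 𝓝[≥] t ×ˢ l, P p.1 p.2) :
    ∀ᶠ p in 𝓝[>] t ×ˢ l, ∀ τ ∈ Icc t p.1, P τ p.2 := by
  obtain ⟨pa, hpa, pb, hpb, hP⟩ := eventually_prod_iff.1 h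
  obtain ⟨u, hu, hsub⟩ := mem_nhdsGE_iff_exists_Ico_subset.1 hpa
  exact eventually_prod_iff.2 ⟨(· < u), (eventually_lt_nhds hu).filter_mono nhdsWithin_le_nhds,
    pb, hpb, fun hx _ hy τ hτ => hP (hsub ⟨hτ.1, hτ.2.trans_lt hx⟩) hy⟩

theorem Real.iInf_eq_neg_iSup_neg {ι : Sort*} (f : ι → ℝ) : ⨅ i, f i = -⨆ i, -f i := by
  rw [iInf, iSup, Real.sInf_def]
  congr 2
  ext x
  simp [neg_eq_iff_eq_neg]

theorem Real.sInf_image_eq_neg_sSup_image_neg {ι : Type*} (f : ι → ℝ) (A : Set ι) :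
    sInf (f '' A) = -sSup ((fun i => -f i) '' A) := by
  rw [Real.sInf_def, ← image_neg_eq_neg, image_image]

theorem image_sub_le_mul_sub_of_hasDerivWithinAt_le {f f' : ℝ → ℝ} {a b c : ℝ} (hab : a ≤ b)
    (hf : ∀ x ∈ Icc a b, HasDerivWithinAt f (f' x) (Icc a b) x) (hf' : ∀ x ∈ Ico a b, f' x ≤ c) :
    f b - f a ≤ c * (b - a) := by
  have := image_le_of_deriv_right_le_deriv_boundary (B := fun x => f a + c * (x - a))
    (fun x hx => (hf x hx).continuousWithinAt)
    (fun x hx => (hf x (Ico_subset_Icc_self hx)).mono_of_mem_nhdsWithin (Icc_mem_nhdsGE_of_mem hx))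
    (by simp) (by fun_prop)
    (fun x _ => ((((hasDerivAt_id x).sub_const a).const_mul c).const_add _).hasDerivWithinAt)
    (by simpa using hf') (right_mem_Icc.2 hab)
  linarith

theorem HasDerivWithinAt.tendsto_div_nhdsGT_zero {f : ℝ → ℝ} {f' t : ℝ}
    (hf : HasDerivWithinAt f f' (Ici t) t) :
    Tendsto (fun h => (f (t + h) - f t) / h) (𝓝[>] 0) (𝓝 f') := by
  rw [hasDerivWithinAt_iff_tendsto_slope, Ici_sdiff_left] at hf
  refine (hf.comp (tendsto_add_nhdsGT_zero t)).congr fun h => ?_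
  simp [slope_def_field]

theorem upperDini_le_of_eventually_le {g : ℝ → ℝ} {t c : ℝ}
    (hbdd : IsBoundedUnder (· ≥ ·) (𝓝[>] 0) fun h => (g (t + h) - g t) / h)
    (hle : ∀ᶠ τ in 𝓝[>] t, g τ ≤ g t + c * (τ - t)) : upperDini g t ≤ c := by
  refine limsup_le_of_le hbdd.isCoboundedUnder_le ?_
  filter_upwards [tendsto_add_nhdsGT_zero t hle, self_mem_nhdsWithin] with h hh (hpos : 0 < h)
  rw [div_le_iff₀ hpos]
  have hh : g (t + h) ≤ g t + c * (t + h - t) := hh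
  linarith

theorem lowerDini_eq_neg_upperDini_neg (g : ℝ → ℝ) (t : ℝ) :
    lowerDini g t = -upperDini (-g) t := by
  rw [lowerDini, upperDini, liminf_eq, limsup_eq, Real.sInf_def, neg_neg]
  congr 1
  ext a
  simp only [Set.mem_neg, Set.mem_ofPred_eq]
  refine eventually_congr (Eventually.of_forall fun h => ?_)
  rw [Pi.neg_apply, Pi.neg_apply, show (-g (t + h) - -g t) / h = -((g (t + h) - g t) / h) by ring,
    neg_le_neg_iff]

section

variable {Θ : Type*} [TopologicalSpace Θ]

theorem eventually_forall_of_forall_eventually_prod [CompactSpace Θ] {α : Type*} {l : Filter α}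
    {P : α → Θ → Prop} (h : ∀ θ, ∀ᶠ p in l ×ˢ 𝓝 θ, P p.1 p.2) : ∀ᶠ x in l, ∀ θ, P x θ := by
  have := isCompact_univ.mem_prod_nhdsSet_of_forall (s := {p | P p.1 p.2}) fun θ _ => h θ
  rw [nhdsSet_univ, prod_top] at this
  obtain ⟨U, hU, hsub⟩ := this
  filter_upwards [hU] with x hx θ using hsub (show (x, θ).1 ∈ U from hx)

theorem ContinuousOn.continuous_slice {f : ℝ → Θ → ℝ} {S : Set ℝ}
    (hf : ContinuousOn (fun p : ℝ × Θ => f p.1 p.2) (S ×ˢ univ)) {τ : ℝ} (hτ : τ ∈ S) :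
    Continuous (f τ) :=
  hf.comp_continuous (Continuous.prodMk_right τ) fun _ => ⟨hτ, trivial⟩

theorem ContinuousOn.tendsto_nhdsGE_prod {f : ℝ → Θ → ℝ} {a b t : ℝ}
    (hf : ContinuousOn (fun p : ℝ × Θ => f p.1 p.2) (Icc a b ×ˢ univ)) (ht : t ∈ Ico a b)
    (θ : Θ) : Tendsto (fun p : ℝ × Θ => f p.1 p.2) (𝓝[≥] t ×ˢ 𝓝 θ) (𝓝 (f t θ)) := by
  refine (hf (t, θ) ⟨Ico_subset_Icc_self ht, trivial⟩).tendsto.mono_left ?_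
  rw [nhdsWithin_prod_eq, nhdsWithin_univ]
  exact prod_mono (nhdsWithin_le_of_mem (Icc_mem_nhdsGE_of_mem ht)) le_rfl

variable [CompactSpace Θ] {s ds : ℝ → Θ → ℝ} {a b t : ℝ}

theorem eventually_forall_le_iSup_add_mul
    (hcont : ContinuousOn (fun p : ℝ × Θ => s p.1 p.2) (Icc a b ×ˢ univ))
    (hderiv : ∀ θ, ∀ τ ∈ Icc a b, HasDerivWithinAt (s · θ) (ds τ θ) (Icc a b) τ)
    (hdscont : ContinuousOn (fun p : ℝ × Θ => ds p.1 p.2) (Icc a b ×ˢ univ))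
    (ht : t ∈ Ico a b) {c : ℝ} (hc : ∀ θ, (∀ θ', s t θ' ≤ s t θ) → ds t θ < c) :
    ∀ᶠ τ in 𝓝[>] t, ∀ θ, s τ θ ≤ (⨆ θ', s t θ') + c * (τ - t) := by
  have hbdd : BddAbove (range (s t)) :=
    (isCompact_range (hcont.continuous_slice (Ico_subset_Icc_self ht))).bddAbove
  refine eventually_forall_of_forall_eventually_prod fun θ => ?_
  by_cases hθ : ∀ θ', s t θ' ≤ s t θ
  · have hnear : ∀ᶠ p in 𝓝[≥] t ×ˢ 𝓝 θ, p.1 ∈ Icc a b ∧ ds p.1 p.2 < c :=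
      (Eventually.prod_inl (Icc_mem_nhdsGE_of_mem ht) _).and
        ((hdscont.tendsto_nhdsGE_prod ht θ).eventually_lt_const (hc θ hθ))
    filter_upwards [hnear.forall_Icc_of_nhdsGE_prod (P := fun τ θ' => τ ∈ Icc a b ∧ ds τ θ' < c),
      Eventually.prod_inl self_mem_nhdsWithin _] with ⟨τ, θ'⟩ hτ (htτ : t < τ)
    have hsub : Icc t τ ⊆ Icc a b := fun x hx => (hτ x hx).1
    have hmvt := image_sub_le_mul_sub_of_hasDerivWithinAt_le htτ.le
      (fun x hx => (hderiv θ' x (hsub hx)).mono hsub)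
      fun x hx => (hτ x (Ico_subset_Icc_self hx)).2.le
    linarith [le_ciSup hbdd θ']
  · push Not at hθ
    obtain ⟨θ₁, hθ₁⟩ := hθ
    have hlim : Tendsto (fun p : ℝ × Θ => s p.1 p.2 - c * (p.1 - t)) (𝓝[≥] t ×ˢ 𝓝 θ)
        (𝓝 (s t θ)) := by
      have hlin := ((by fun_prop : Continuous fun τ : ℝ => c * (τ - t)).tendsto t).comp
        ((tendsto_fst (f := 𝓝[≥] t) (g := 𝓝 θ)).mono_right nhdsWithin_le_nhds)
      simpa using (hcont.tendsto_nhdsGE_prod ht θ).sub hlin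
    have hbelow := hlim.eventually_lt_const (hθ₁.trans_le (le_ciSup hbdd θ₁))
    refine (hbelow.filter_mono (prod_mono (nhdsWithin_mono t Ioi_subset_Ici_self) le_rfl)).mono
      fun p hp => ?_
    linarith

theorem upperDini_iSup_le [Nonempty Θ]
    (hcont : ContinuousOn (fun p : ℝ × Θ => s p.1 p.2) (Icc a b ×ˢ univ))
    (hderiv : ∀ θ, ∀ τ ∈ Icc a b, HasDerivWithinAt (s · θ) (ds τ θ) (Icc a b) τ)
    (hdscont : ContinuousOn (fun p : ℝ × Θ => ds p.1 p.2) (Icc a b ×ˢ univ)) (ht : t ∈ Ico a b) :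
    upperDini (fun τ => ⨆ θ, s τ θ) t ≤ sSup (ds t '' {θ | ∀ θ', s t θ' ≤ s t θ}) := by
  have htab := Ico_subset_Icc_self ht
  have hbdd : ∀ τ ∈ Icc a b, BddAbove (range (s τ)) := fun τ hτ =>
    (isCompact_range (hcont.continuous_slice hτ)).bddAbove
  obtain ⟨θ₀, -, hθ₀⟩ := isCompact_univ.exists_isMaxOn univ_nonempty
    (hcont.continuous_slice htab).continuousOn
  have hargmax : IsCompact {θ | ∀ θ', s t θ' ≤ s t θ} := by
    rw [ofPred_forall]
    exact (isClosed_iInter fun θ' =>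
      isClosed_le continuous_const (hcont.continuous_slice htab)).isCompact
  have hbddA := (hargmax.image (hdscont.continuous_slice htab)).bddAbove
  -- Without this lower bound the real `limsup` would be a junk value. It holds since the slope
  -- of `M` at `t` dominates that of `s(·, θ₀)`, which converges to `∂ₜs(t, θ₀)`.
  have hcobdd : IsBoundedUnder (· ≥ ·) (𝓝[>] 0) fun h => ((⨆ θ, s (t + h) θ) - ⨆ θ, s t θ) / h := by
    refine ((hderiv θ₀ t htab).mono_of_mem_nhdsWithin (Icc_mem_nhdsGE_of_mem ht)
      |>.tendsto_div_nhdsGT_zero.isBoundedUnder_ge).mono_ge ?_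
    filter_upwards [tendsto_add_nhdsGT_zero t (Icc_mem_nhdsGT_of_mem ht), self_mem_nhdsWithin]
      with h hh (hpos : 0 < h)
    rw [le_antisymm (ciSup_le fun θ => hθ₀ (mem_univ θ)) (le_ciSup (hbdd t htab) θ₀)]
    gcongr
    exact le_ciSup (hbdd _ hh) θ₀
  refine le_of_forall_pos_le_add fun ε hε => upperDini_le_of_eventually_le hcobdd ?_
  filter_upwards [eventually_forall_le_iSup_add_mul hcont hderiv hdscont ht
    (c := sSup (ds t '' {θ | ∀ θ', s t θ' ≤ s t θ}) + ε)
    fun θ hθ => (le_csSup hbddA (mem_image_of_mem _ hθ)).trans_lt (lt_add_of_pos_right _ hε)]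
    with τ hτ using ciSup_le hτ

theorem le_lowerDini_iInf [Nonempty Θ]
    (hcont : ContinuousOn (fun p : ℝ × Θ => s p.1 p.2) (Icc a b ×ˢ univ))
    (hderiv : ∀ θ, ∀ τ ∈ Icc a b, HasDerivWithinAt (s · θ) (ds τ θ) (Icc a b) τ)
    (hdscont : ContinuousOn (fun p : ℝ × Θ => ds p.1 p.2) (Icc a b ×ˢ univ)) (ht : t ∈ Ico a b) :
    sInf (ds t '' {θ | ∀ θ', s t θ ≤ s t θ'}) ≤ lowerDini (fun τ => ⨅ θ, s τ θ) t := by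
  have hneg := upperDini_iSup_le (s := fun τ θ => -s τ θ) (ds := fun τ θ => -ds τ θ) hcont.neg
    (fun θ τ hτ => (hderiv θ τ hτ).neg) hdscont.neg ht
  simp only [neg_le_neg_iff] at hneg
  have hm : (fun τ => ⨅ θ, s τ θ) = -fun τ => ⨆ θ, -s τ θ := by
    ext τ
    exact Real.iInf_eq_neg_iSup_neg _
  rw [hm, lowerDini_eq_neg_upperDini_neg, neg_neg, Real.sInf_image_eq_neg_sSup_image_neg]
  exact neg_le_neg hneg

end

theorem dini_derivative_of_extremum_general
    {Θ : Type*} [TopologicalSpace Θ] [CompactSpace Θ] [Nonempty Θ]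
    (T : ℝ)
    (s ds : ℝ → Θ → ℝ)
    (hcont : ContinuousOn (fun p : ℝ × Θ => s p.1 p.2) (Set.Icc 0 T ×ˢ Set.univ))
    (hderiv : ∀ θ : Θ, ∀ t ∈ Set.Icc 0 T,
      HasDerivWithinAt (fun τ => s τ θ) (ds t θ) (Set.Icc 0 T) t)
    (hdscont : ContinuousOn (fun p : ℝ × Θ => ds p.1 p.2) (Set.Icc 0 T ×ˢ Set.univ))
    (M m : ℝ → ℝ)
    (hM : ∀ t, M t = ⨆ θ : Θ, s t θ)
    (hm : ∀ t, m t = ⨅ θ : Θ, s t θ)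
    (t : ℝ) (ht : t ∈ Set.Ico 0 T) :
    upperDini M t ≤ sSup (ds t '' {θ : Θ | ∀ θ' : Θ, s t θ' ≤ s t θ}) ∧
    sInf (ds t '' {θ : Θ | ∀ θ' : Θ, s t θ ≤ s t θ'}) ≤ lowerDini m t := by
  rw [funext hM, funext hm]
  exact ⟨upperDini_iSup_le hcont hderiv hdscont ht, le_lowerDini_iInf hcont hderiv hdscont ht⟩

/-- For a jointly continuous `s` on `[0,T] × Θ` (with `Θ` compact nonempty), continuously
differentiable in time, the upper Dini derivative of the running maximum `M(t) = max_θ s(t,θ)` is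
bounded by the maximum of `∂_t s(t,·)` over the argmax set, and the lower Dini derivative of the
running minimum `m(t) = min_θ s(t,θ)` is bounded below by the minimum of `∂_t s(t,·)` over the
argmin set. -/
theorem dini_derivative_of_extremum
    {Θ : Type*} [TopologicalSpace Θ] [CompactSpace Θ] [Nonempty Θ]
    (T : ℝ) (hT : 0 < T)
    (s ds : ℝ → Θ → ℝ)
    (hcont : ContinuousOn (fun p : ℝ × Θ => s p.1 p.2) (Set.Icc 0 T ×ˢ Set.univ))
    (hderiv : ∀ θ : Θ, ∀ t ∈ Set.Icc 0 T,
      HasDerivWithinAt (fun τ => s τ θ) (ds t θ) (Set.Icc 0 T) t)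
    (hdscont : ContinuousOn (fun p : ℝ × Θ => ds p.1 p.2) (Set.Icc 0 T ×ˢ Set.univ))
    (M m : ℝ → ℝ)
    (hM : ∀ t, M t = ⨆ θ : Θ, s t θ)
    (hm : ∀ t, m t = ⨅ θ : Θ, s t θ)
    (t : ℝ) (ht : t ∈ Set.Ico 0 T) :
    upperDini M t ≤ sSup (ds t '' {θ : Θ | ∀ θ' : Θ, s t θ' ≤ s t θ}) ∧
    sInf (ds t '' {θ : Θ | ∀ θ' : Θ, s t θ ≤ s t θ'}) ≤ lowerDini m t :=
  dini_derivative_of_extremum_general T s ds hcont hderiv hdscont M m hM hm t ht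
end

section
/- Let μ be a σ-finite measure on ℝ^d and let ρ' : ℝ^d → ℝ be a strictly positive probability density with respect to μ, defining the probability measure σ with dσ = ρ' dμ. Assume σ satisfies the log-Sobolev inequality with constant λ > 0: for every continuously differentiable f : ℝ^d → ℝ with ∫ f² dσ = 1, one has ∫ f² log f² dσ ≤ (2/λ) ∫ ‖∇f‖² dσ. Let ρ be a probability density with respect to μ such that r := ρ/ρ' is strictly positive and continuously differentiable, and suppose ∫ ρ |log(ρ/ρ')| dμ and ∫ ‖∇ log(ρ/ρ')‖² ρ dμ are finite. Then ∫ ‖∇ log(ρ/ρ')‖² ρ dμ ≥ 2λ · ∫ ρ log(ρ/ρ') dμ. -/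
/-!
Apply the log-Sobolev inequality to `f = √r` with `r = ρ/ρ'`. Then `f² ρ' = ρ`, so `f` is
normalised and the entropy `∫ f² log f² dσ` is the KL divergence, while the chain rule gives
`‖∇√r‖² = ‖∇ log r‖² r / 4`, so `∫ ‖∇f‖² dσ` is a quarter of the relative Fisher information.
-/

open MeasureTheory Real

section Gradient

variable {E : Type*} [NormedAddCommGroup E] [InnerProductSpace ℝ E] [CompleteSpace E]
  {r : E → ℝ} {x : E}

theorem norm_gradient_eq_norm_fderiv (f : E → ℝ) (x : E) : ‖gradient f x‖ = ‖fderiv ℝ f x‖ := by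
  simp [gradient]

theorem norm_gradient_log (hr : DifferentiableAt ℝ r x) (hpos : 0 < r x) :
    ‖gradient (fun y => log (r y)) x‖ = ‖fderiv ℝ r x‖ / r x := by
  rw [norm_gradient_eq_norm_fderiv, (hr.hasFDerivAt.log hpos.ne').fderiv, norm_smul,
    norm_inv, norm_of_nonneg hpos.le, inv_mul_eq_div]

theorem norm_gradient_sqrt (hr : DifferentiableAt ℝ r x) (hpos : 0 < r x) :
    ‖gradient (fun y => √(r y)) x‖ = ‖fderiv ℝ r x‖ / (2 * √(r x)) := by
  rw [norm_gradient_eq_norm_fderiv, (hr.hasFDerivAt.sqrt hpos.ne').fderiv, norm_smul,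
    norm_of_nonneg (by positivity), one_div_mul_eq_div]

theorem sq_norm_gradient_sqrt (hr : DifferentiableAt ℝ r x) (hpos : 0 < r x) :
    ‖gradient (fun y => √(r y)) x‖ ^ 2 = ‖gradient (fun y => log (r y)) x‖ ^ 2 * r x / 4 := by
  rw [norm_gradient_sqrt hr hpos, norm_gradient_log hr hpos, div_pow, mul_pow,
    sq_sqrt hpos.le]
  field_simp
  ring

end Gradient

theorem fisher_ge_lsi_kl_general {d : ℕ}
    (μ : Measure (EuclideanSpace ℝ (Fin d)))
    (ρ ρ' : EuclideanSpace ℝ (Fin d) → ℝ)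
    (hρpos : ∀ θ, 0 < ρ θ) (hρ'pos : ∀ θ, 0 < ρ' θ)
    (hρ1 : ∫ θ, ρ θ ∂μ = 1)
    (lam : ℝ) (hlam : 0 < lam)
    (hLSI : ∀ f : EuclideanSpace ℝ (Fin d) → ℝ, ContDiff ℝ 1 f →
      (∫ θ, (f θ) ^ 2 * ρ' θ ∂μ) = 1 →
      ∫ θ, (f θ) ^ 2 * Real.log ((f θ) ^ 2) * ρ' θ ∂μ ≤
        (2 / lam) * ∫ θ, ‖gradient f θ‖ ^ 2 * ρ' θ ∂μ)
    (hr : ContDiff ℝ 1 (fun θ => ρ θ / ρ' θ)) :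
    2 * lam * ∫ θ, ρ θ * Real.log (ρ θ / ρ' θ) ∂μ ≤
      ∫ θ, ‖gradient (fun x => Real.log (ρ x / ρ' x)) θ‖ ^ 2 * ρ θ ∂μ := by
  set r := fun θ => ρ θ / ρ' θ
  set fisher := ∫ θ, ‖gradient (fun x => log (r x)) θ‖ ^ 2 * ρ θ ∂μ
  have hrpos θ : 0 < r θ := div_pos (hρpos θ) (hρ'pos θ)
  have hrρ' θ : r θ * ρ' θ = ρ θ := div_mul_cancel₀ _ (hρ'pos θ).ne'
  have hsq θ : √(r θ) ^ 2 = r θ := sq_sqrt (hrpos θ).le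
  have hsqrt : ContDiff ℝ 1 fun θ => √(r θ) :=
    contDiff_iff_contDiffAt.2 fun θ => hr.contDiffAt.sqrt (hrpos θ).ne'
  have hnorm : ∫ θ, √(r θ) ^ 2 * ρ' θ ∂μ = 1 := by simpa only [hsq, hrρ'] using hρ1
  have hentropy : ∫ θ, √(r θ) ^ 2 * log (√(r θ) ^ 2) * ρ' θ ∂μ = ∫ θ, ρ θ * log (r θ) ∂μ := by
    simp only [hsq, mul_right_comm _ (log _), hrρ']
  have henergy : ∫ θ, ‖gradient (fun x => √(r x)) θ‖ ^ 2 * ρ' θ ∂μ = fisher / 4 := by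
    rw [← integral_div]
    congr 1 with θ
    rw [sq_norm_gradient_sqrt (hr.differentiable one_ne_zero θ) (hrpos θ), mul_div_right_comm,
      mul_assoc, hrρ', div_mul_eq_mul_div]
  have hLSIr := hLSI _ hsqrt hnorm
  rw [hentropy, henergy, show 2 / lam * (fisher / 4) = fisher / (2 * lam) by field_simp; ring]
    at hLSIr
  exact (le_div_iff₀' (by positivity)).1 hLSIr

/-- If the probability measure `σ = ρ' dμ` satisfies a log-Sobolev inequality with constant
`λ > 0`, then for any probability density `ρ` (w.r.t. `μ`) with smooth positive ratio
`r = ρ/ρ'`, the relative Fisher information dominates `2λ` times the KL divergence: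
`∫ ‖∇ log(ρ/ρ')‖² ρ dμ ≥ 2λ ∫ ρ log(ρ/ρ') dμ`. -/
theorem fisher_ge_lsi_kl {d : ℕ}
    (μ : Measure (EuclideanSpace ℝ (Fin d))) [SigmaFinite μ]
    (ρ ρ' : EuclideanSpace ℝ (Fin d) → ℝ)
    (hρm : Measurable ρ) (hρ'm : Measurable ρ')
    (hρpos : ∀ θ, 0 < ρ θ) (hρ'pos : ∀ θ, 0 < ρ' θ)
    (hρ1 : ∫ θ, ρ θ ∂μ = 1) (hρ'1 : ∫ θ, ρ' θ ∂μ = 1)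
    (lam : ℝ) (hlam : 0 < lam)
    (hLSI : ∀ f : EuclideanSpace ℝ (Fin d) → ℝ, ContDiff ℝ 1 f →
      (∫ θ, (f θ) ^ 2 * ρ' θ ∂μ) = 1 →
      ∫ θ, (f θ) ^ 2 * Real.log ((f θ) ^ 2) * ρ' θ ∂μ ≤
        (2 / lam) * ∫ θ, ‖gradient f θ‖ ^ 2 * ρ' θ ∂μ)
    (hr : ContDiff ℝ 1 (fun θ => ρ θ / ρ' θ))
    (hKLint : Integrable (fun θ => ρ θ * |Real.log (ρ θ / ρ' θ)|) μ)
    (hFishint : Integrable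
      (fun θ => ‖gradient (fun x => Real.log (ρ x / ρ' x)) θ‖ ^ 2 * ρ θ) μ) :
    2 * lam * ∫ θ, ρ θ * Real.log (ρ θ / ρ' θ) ∂μ ≤
      ∫ θ, ‖gradient (fun x => Real.log (ρ x / ρ' x)) θ‖ ^ 2 * ρ θ ∂μ :=
  fisher_ge_lsi_kl_general μ ρ ρ' hρpos hρ'pos hρ1 lam hlam hLSI hr
end

section
/- Let P and Q be probability measures on a measurable space (Θ, ℱ) with P absolutely continuous with respect to Q, and suppose the Kullback–Leibler divergence KL(P‖Q) = ∫ log(dP/dQ) dP is finite. Then for every ε > 0, the hockey-stick divergence satisfies HS_ε(P‖Q) = sup_{S∈ℱ}[P(S) − e^ε Q(S)] ≤ KL(P‖Q)/ε; in particular, for every measurable set S, P(S) ≤ e^ε·Q(S) + KL(P‖Q)/ε. -/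
/-
By the Fenchel–Young inequality for `klFun x = x log x + 1 - x`, whose convex conjugate is
`y ↦ exp y - 1`, and since `exp y - 1 ≤ y exp y`, we have `y (x - exp y) ≤ klFun x` for all
`x ≥ 0`. Applying this with `x = dP/dQ` and `y = ε` and integrating over `S` against `Q` gives
`ε (P(S) - exp ε Q(S)) ≤ ∫ klFun (dP/dQ) dQ = KL(P‖Q)`.
-/

open MeasureTheory Real InformationTheory

lemma mul_sub_exp_add_one_le_klFun (y : ℝ) {x : ℝ} (hx : 0 ≤ x) :
    y * x - exp y + 1 ≤ klFun x := by
  rw [klFun_apply]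
  rcases hx.eq_or_lt with rfl | hx
  · simpa using (exp_pos y).le
  -- `x (t + 1) ≤ x exp t = exp y` at `t = y - log x`
  have h := mul_le_mul_of_nonneg_left (add_one_le_exp (y - log x)) hx.le
  rw [exp_sub, exp_log hx, mul_div_cancel₀ _ hx.ne'] at h
  linarith

lemma mul_sub_exp_le_klFun (y : ℝ) {x : ℝ} (hx : 0 ≤ x) :
    y * (x - exp y) ≤ klFun x := by
  have h_exp : (1 - y) * exp y ≤ 1 := by
    simpa [← exp_add] using mul_le_mul_of_nonneg_right (one_sub_le_exp_neg y) (exp_pos y).le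
  linarith [mul_sub_exp_add_one_le_klFun y hx]

lemma mul_measureReal_sub_exp_mul_le_toReal_klDiv {α : Type*} [MeasurableSpace α]
    {μ ν : Measure α} [IsFiniteMeasure μ] [IsFiniteMeasure ν]
    (hμν : μ ≪ ν) (h_int : Integrable (llr μ ν) μ) (y : ℝ) (s : Set α) :
    y * (μ.real s - exp y * ν.real s) ≤ (klDiv μ ν).toReal := by
  have h_int_klFun : Integrable (fun x ↦ klFun (μ.rnDeriv ν x).toReal) ν :=
    (integrable_klFun_rnDeriv_iff hμν).2 h_int
  have h_int_rnDeriv : Integrable (fun x ↦ (μ.rnDeriv ν x).toReal) ν :=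
    Measure.integrable_toReal_rnDeriv
  calc y * (μ.real s - exp y * ν.real s)
      = ∫ x in s, y * ((μ.rnDeriv ν x).toReal - exp y) ∂ν := by
        rw [integral_const_mul, integral_sub h_int_rnDeriv.integrableOn (integrableOn_const),
          Measure.setIntegral_toReal_rnDeriv hμν, setIntegral_const, smul_eq_mul, mul_comm (exp y)]
    _ ≤ ∫ x in s, klFun (μ.rnDeriv ν x).toReal ∂ν :=
        setIntegral_mono ((h_int_rnDeriv.sub (integrable_const _)).const_mul y).integrableOn
          h_int_klFun.integrableOn fun x ↦ mul_sub_exp_le_klFun y ENNReal.toReal_nonneg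
    _ ≤ ∫ x, klFun (μ.rnDeriv ν x).toReal ∂ν :=
        setIntegral_le_integral h_int_klFun
          (Filter.Eventually.of_forall fun x ↦ klFun_nonneg ENNReal.toReal_nonneg)
    _ = (klDiv μ ν).toReal := (toReal_klDiv_eq_integral_klFun hμν).symm

/-- The hockey-stick divergence is bounded by `KL(P‖Q)/ε`: for probability measures `P ≪ Q`
with finite KL divergence `KL(P‖Q) = ∫ log(dP/dQ) dP` and every `ε > 0`,
`sup_S [P(S) − e^ε Q(S)] ≤ KL(P‖Q)/ε`; in particular
`P(S) ≤ e^ε Q(S) + KL(P‖Q)/ε` for every measurable `S`. -/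
theorem hockeyStick_le_kl_div_eps
    {Θ : Type*} [MeasurableSpace Θ]
    (P Q : Measure Θ) [IsProbabilityMeasure P] [IsProbabilityMeasure Q]
    (hPQ : P ≪ Q)
    (KL : ℝ) (hKL : KL = ∫ θ, Real.log ((P.rnDeriv Q θ).toReal) ∂P)
    (hKLint : Integrable (fun θ => Real.log ((P.rnDeriv Q θ).toReal)) P)
    (ε : ℝ) (hε : 0 < ε) :
    (⨆ S : {S : Set Θ // MeasurableSet S},
        ((P S.1).toReal - Real.exp ε * (Q S.1).toReal)) ≤ KL / ε ∧
    ∀ S : Set Θ, MeasurableSet S →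
      (P S).toReal ≤ Real.exp ε * (Q S).toReal + KL / ε := by
  have hKL_eq : KL = (klDiv P Q).toReal := by
    rw [hKL, toReal_klDiv_of_measure_eq hPQ (by simp)]
    rfl
  have h_bound : ∀ S : Set Θ, (P S).toReal - exp ε * (Q S).toReal ≤ KL / ε := fun S ↦ by
    rw [le_div_iff₀ hε, mul_comm, hKL_eq]
    exact mul_measureReal_sub_exp_mul_le_toReal_klDiv hPQ hKLint ε S
  refine ⟨?_, fun S _ ↦ by linarith [h_bound S]⟩
  have : Nonempty {S : Set Θ // MeasurableSet S} := ⟨⟨∅, MeasurableSet.empty⟩⟩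
  exact ciSup_le fun S ↦ h_bound S.1
end

section
/- Let Θ ⊂ ℝ^d be a compact set with Lebesgue volume m = Vol(Θ) < ∞, let f : Θ → ℝ be measurable and bounded, and set f* = inf_{θ∈Θ} f(θ). Fix β > 0 and let π_β be the probability measure on Θ with density π_β(θ) = exp(−β f(θ))/Z_β, Z_β = ∫_Θ exp(−β f(θ)) dθ, with respect to Lebesgue measure. Fix α > 0 and suppose the sublevel set S_α = {θ ∈ Θ : f(θ) ≤ f* + α} has m_α = Vol(S_α) > 0. Then for every r ≥ 0, π_β({θ : f(θ) ≥ f* + α + r}) ≤ min(1, (m/m_α)·exp(−β r)). -/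
open MeasureTheory Real

/-! On the sublevel set `{f ≤ t}` the unnormalised density `exp (-β f)` is at least
`exp (-β t)` (this needs `β ≥ 0`), so the partition function satisfies
`Z ≥ μ {f ≤ t} · exp (-β t)`; on the superlevel set `{f ≥ t + r}` the density is at most
`exp (-β (t + r))`, so that set has Gibbs mass at most
`μ univ · exp (-β (t + r)) / Z ≤ μ univ / μ {f ≤ t} · exp (-β r)`.
The bound by `1` holds because `Z > 0` makes the Gibbs measure a probability measure. -/

namespace MeasureTheory

open Set

variable {X : Type*} [MeasurableSpace X]

noncomputable def partitionFunction (μ : Measure X) (β : ℝ) (f : X → ℝ) : ℝ :=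
  ∫ x, exp (-(β * f x)) ∂μ

noncomputable def gibbsMeasure (μ : Measure X) (β : ℝ) (f : X → ℝ) : Measure X :=
  μ.withDensity fun x => ENNReal.ofReal (exp (-(β * f x)) / partitionFunction μ β f)

variable {μ : Measure X} {β : ℝ} {f : X → ℝ}

lemma partitionFunction_nonneg : 0 ≤ partitionFunction μ β f :=
  integral_nonneg fun _ => (exp_pos _).le

lemma integrable_exp_neg_mul_of_ae_le [IsFiniteMeasure μ] (hf : Measurable f) (hβ : 0 ≤ β)
    {C : ℝ} (hC : ∀ᵐ x ∂μ, C ≤ f x) : Integrable (fun x => exp (-(β * f x))) μ := by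
  refine Integrable.of_bound (by fun_prop) (exp (-(β * C))) ?_
  filter_upwards [hC] with x hx
  rw [norm_of_nonneg (exp_pos _).le]
  exact exp_le_exp.2 (neg_le_neg (mul_le_mul_of_nonneg_left hx hβ))

lemma isProbabilityMeasure_gibbsMeasure (hZ : partitionFunction μ β f ≠ 0) :
    IsProbabilityMeasure (gibbsMeasure μ β f) := by
  constructor
  rw [gibbsMeasure, withDensity_apply _ MeasurableSet.univ, Measure.restrict_univ,
    ← ofReal_integral_eq_lintegral_ofReal ((Integrable.of_integral_ne_zero hZ).div_const _)
      (ae_of_all _ fun _ => div_nonneg (exp_pos _).le partitionFunction_nonneg),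
    integral_div, ← partitionFunction, div_self hZ, ENNReal.ofReal_one]

lemma measureReal_sublevel_mul_exp_le_partitionFunction [IsFiniteMeasure μ] (hf : Measurable f)
    (hβ : 0 ≤ β) (hexp : Integrable (fun x => exp (-(β * f x))) μ) (t : ℝ) :
    μ.real {x | f x ≤ t} * exp (-(β * t)) ≤ partitionFunction μ β f := by
  have hS : MeasurableSet {x | f x ≤ t} := hf measurableSet_Iic
  calc μ.real {x | f x ≤ t} * exp (-(β * t))
      = exp (-(β * t)) * μ.real {x | f x ≤ t} := mul_comm _ _
    _ ≤ ∫ x in {x | f x ≤ t}, exp (-(β * f x)) ∂μ :=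
        setIntegral_ge_of_const_le_real hS (measure_ne_top _ _)
          (fun x hx => exp_le_exp.2 (neg_le_neg (mul_le_mul_of_nonneg_left hx hβ))) hexp.integrableOn
    _ ≤ partitionFunction μ β f :=
        setIntegral_le_integral hexp (ae_of_all _ fun _ => (exp_pos _).le)

lemma gibbsMeasure_superlevel_le [IsFiniteMeasure μ] (hf : Measurable f) (hβ : 0 ≤ β) (s : ℝ) :
    gibbsMeasure μ β f {x | s ≤ f x} ≤
      ENNReal.ofReal (μ.real univ * exp (-(β * s)) / partitionFunction μ β f) := by
  set Z := partitionFunction μ β f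
  calc gibbsMeasure μ β f {x | s ≤ f x}
      = ∫⁻ x in {x | s ≤ f x}, ENNReal.ofReal (exp (-(β * f x)) / Z) ∂μ :=
        withDensity_apply _ (hf measurableSet_Ici)
    _ ≤ ∫⁻ _ in {x | s ≤ f x}, ENNReal.ofReal (exp (-(β * s)) / Z) ∂μ :=
        setLIntegral_mono measurable_const fun x hx => ENNReal.ofReal_le_ofReal <|
          div_le_div_of_nonneg_right
            (exp_le_exp.2 (neg_le_neg (mul_le_mul_of_nonneg_left hx hβ))) partitionFunction_nonneg
    _ = ENNReal.ofReal (exp (-(β * s)) / Z) * μ {x | s ≤ f x} := setLIntegral_const _ _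
    _ ≤ ENNReal.ofReal (exp (-(β * s)) / Z) * μ univ := by gcongr; exact subset_univ _
    _ = ENNReal.ofReal (μ.real univ * exp (-(β * s)) / Z) := by
        rw [← ofReal_measureReal (measure_ne_top μ univ),
          ← ENNReal.ofReal_mul (div_nonneg (exp_pos _).le partitionFunction_nonneg)]
        congr 1
        ring

theorem gibbsMeasure_tail_le [IsFiniteMeasure μ] (hf : Measurable f) (hβ : 0 ≤ β)
    (hexp : Integrable (fun x => exp (-(β * f x))) μ) {t : ℝ} (ht : 0 < μ.real {x | f x ≤ t})
    (r : ℝ) :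
    gibbsMeasure μ β f {x | t + r ≤ f x} ≤
      ENNReal.ofReal (min 1 (μ.real univ / μ.real {x | f x ≤ t} * exp (-(β * r)))) := by
  have hZ := measureReal_sublevel_mul_exp_le_partitionFunction hf hβ hexp t
  have hZpos : 0 < partitionFunction μ β f := (mul_pos ht (exp_pos _)).trans_le hZ
  have := isProbabilityMeasure_gibbsMeasure hZpos.ne'
  rw [ENNReal.ofReal_min, ENNReal.ofReal_one]
  refine le_min prob_le_one ((gibbsMeasure_superlevel_le hf hβ (t + r)).trans ?_)
  gcongr ENNReal.ofReal ?_
  calc μ.real univ * exp (-(β * (t + r))) / partitionFunction μ β f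
      ≤ μ.real univ * exp (-(β * (t + r))) / (μ.real {x | f x ≤ t} * exp (-(β * t))) := by
        gcongr
    _ = μ.real univ / μ.real {x | f x ≤ t} * exp (-(β * r)) := by
        rw [mul_add, neg_add, exp_add]; field_simp

end MeasureTheory

theorem exponential_mechanism_tail_bound_general {d : ℕ}
    (Θ : Set (EuclideanSpace ℝ (Fin d))) (hΘc : IsCompact Θ) (hΘm : MeasurableSet Θ)
    (f : EuclideanSpace ℝ (Fin d) → ℝ) (hfm : Measurable f)
    (C : ℝ) (hfbd : ∀ θ ∈ Θ, |f θ| ≤ C)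
    (fstar : ℝ)
    (β : ℝ) (hβ : 0 < β)
    (Zβ : ℝ) (hZβ : Zβ = ∫ θ in Θ, Real.exp (-(β * f θ)))
    (πβ : Measure (EuclideanSpace ℝ (Fin d)))
    (hπβ : πβ = (volume.restrict Θ).withDensity
      (fun θ => ENNReal.ofReal (Real.exp (-(β * f θ)) / Zβ)))
    (m mα : ℝ) (hm : m = (volume Θ).toReal)
    (α : ℝ)
    (hmα : mα = (volume {θ ∈ Θ | f θ ≤ fstar + α}).toReal)
    (hmαpos : 0 < mα)
    (r : ℝ) :
    πβ {θ | fstar + α + r ≤ f θ} ≤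
      ENNReal.ofReal (min 1 (m / mα * Real.exp (-(β * r)))) := by
  subst hZβ hπβ hm hmα
  have : IsFiniteMeasure (volume.restrict Θ) := isFiniteMeasure_restrict.2 hΘc.measure_lt_top.ne
  have hexp := integrable_exp_neg_mul_of_ae_le (μ := volume.restrict Θ) hfm hβ.le (C := -C)
    (ae_restrict_of_forall_mem hΘm fun θ hθ => (abs_le.1 (hfbd θ hθ)).1)
  have hsublevel : (volume.restrict Θ).real {θ | f θ ≤ fstar + α} =
      (volume {θ ∈ Θ | f θ ≤ fstar + α}).toReal := by
    have hS : MeasurableSet {θ | f θ ≤ fstar + α} := hfm measurableSet_Iic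
    rw [measureReal_restrict_apply hS, Set.inter_comm]
    rfl
  rw [← hsublevel] at hmαpos ⊢
  rw [← measureReal_def, ← measureReal_restrict_apply_univ]
  exact gibbsMeasure_tail_le hfm hβ.le hexp hmαpos r

/-- Tail bound for the exponential mechanism: for the Gibbs probability measure
`π_β ∝ exp(−β f)` on a compact `Θ` of finite volume `m`, with near-optimal sublevel set
`S_α` of positive volume `m_α`, one has
`π_β({f ≥ f* + α + r}) ≤ min(1, (m/m_α) e^{−β r})` for every `r ≥ 0`. -/
theorem exponential_mechanism_tail_bound {d : ℕ}
    (Θ : Set (EuclideanSpace ℝ (Fin d))) (hΘc : IsCompact Θ) (hΘm : MeasurableSet Θ)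
    (f : EuclideanSpace ℝ (Fin d) → ℝ) (hfm : Measurable f)
    (C : ℝ) (hfbd : ∀ θ ∈ Θ, |f θ| ≤ C)
    (fstar : ℝ) (hfstar : fstar = sInf (f '' Θ))
    (β : ℝ) (hβ : 0 < β)
    (Zβ : ℝ) (hZβ : Zβ = ∫ θ in Θ, Real.exp (-(β * f θ)))
    (πβ : Measure (EuclideanSpace ℝ (Fin d)))
    (hπβ : πβ = (volume.restrict Θ).withDensity
      (fun θ => ENNReal.ofReal (Real.exp (-(β * f θ)) / Zβ)))
    (m mα : ℝ) (hm : m = (volume Θ).toReal)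
    (α : ℝ) (hα : 0 < α)
    (hmα : mα = (volume {θ ∈ Θ | f θ ≤ fstar + α}).toReal)
    (hmαpos : 0 < mα)
    (r : ℝ) (hr : 0 ≤ r) :
    πβ {θ | fstar + α + r ≤ f θ} ≤
      ENNReal.ofReal (min 1 (m / mα * Real.exp (-(β * r)))) :=
  exponential_mechanism_tail_bound_general Θ hΘc hΘm f hfm C hfbd fstar β hβ Zβ hZβ πβ hπβ m mα hm α
    hmα hmαpos r
end
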